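/- Let u = p/q with p, q positive coprime integers such that both p* and q* are odd. Then limsup_{t → +∞} |μ̂_u(t)| > 0; in particular μ̂_u(t) does not tend to 0 as t → ∞, and μ_u is singular with respect to Lebesgue measure. -/

import Mathlib

open MeasureTheory Filter

/-- The product of Bernoulli(1/2) measures on `{0,1}^ℕ`, realized as the joint law of
the binary digits of a uniform random point of `[0,1)` (these digits are i.i.d.
Bernoulli(1/2), so this is exactly the infinite product of Bernoulli(1/2) measures). -/
noncomputable def bernoulliProd : Measure (ℕ → Bool) :=
  Measure.map (fun x j => decide (⌊x * 2 ^ (j + 1)⌋ % 2 = 1))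
    (volume.restrict (Set.Ico (0 : ℝ) 1))

/-- `μ_u`: the pushforward of the product of Bernoulli(1/2) measures on `({0,1}^ℕ)²`
under `(ε, ε') ↦ ∑_{j=1}^∞ (ε_j + u·ε'_j)·4^{-j}`. -/
noncomputable def muBes (u : ℝ) : Measure ℝ :=
  Measure.map
    (fun εε' : (ℕ → Bool) × (ℕ → Bool) =>
      ∑' j : ℕ, ((if εε'.1 j then (1 : ℝ) else 0) + u * (if εε'.2 j then (1 : ℝ) else 0))
        / 4 ^ (j + 1))
    (bernoulliProd.prod bernoulliProd)

/-- The Fourier transform `μ̂(t) = ∫ e^{itx} dμ(x)` of a measure on `ℝ`. -/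
noncomputable def fourierMeasure (μ : Measure ℝ) (t : ℝ) : ℂ :=
  ∫ x, Complex.exp (Complex.I * t * x) ∂μ

/-- `n* `: the first nonzero digit from the right of `n` in base `b`,
i.e. `(n / b^{j*}) % b` where `j*` is the largest `j` with `b^j ∣ n`. -/
def fstDigit (b n : ℕ) : ℕ := n / b ^ padicValNat b n % b

/-!
Let `ν` be the law of `∑ ε_j 4^{-(j+1)}` for i.i.d. fair bits `ε_j`. Then `μ_u` is the law of
`X + uY` with `X, Y` independent of law `ν`, so `μ̂_u(t) = ν̂(t) ν̂(ut)`, and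
`ν̂(4t) = (1 + e^{it})/2 · ν̂(t)`. At `t ∈ 2πℤ` the multiplier is `1`, so `ν̂(2πn·4^k) = ν̂(2πn)`;
iterating the functional equation towards `0` shows `ν̂(2πm) ≠ 0` when `m*` is odd, because then
no factor `1 + e^{2πi m/4^{j+1}}` vanishes. Hence `μ̂_u(2πq·4^k) = ν̂(2πq) ν̂(2πp)` is a nonzero
constant along a sequence tending to infinity.

For singularity: `μ_u` is a fixed point of the Hutchinson operator of the maps `x ↦ (x + d)/4`,
`d ∈ {0, 1, u, 1 + u}`. This operator preserves both singular and absolutely continuous measures,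
so by uniqueness of the Lebesgue decomposition the absolutely continuous part `ρ` of `μ_u` is a
fixed point as well. Its Fourier transform then satisfies the same functional equation, and
comparing both near `0` gives `ρ̂ = ρ(ℝ) μ̂_u`. By Riemann–Lebesgue `ρ̂ → 0` while `μ̂_u` does not,
so `ρ = 0`.
-/

open Complex Set
open scoped ENNReal NNReal Topology Real

noncomputable section

lemma measurableEmbedding_add_div (c : ℝ) {r : ℝ} (hr : r ≠ 0) :
    MeasurableEmbedding fun x : ℝ => (x + c) / r :=
  ((Homeomorph.addRight c).trans (Homeomorph.mulRight₀ r⁻¹ (inv_ne_zero hr))).measurableEmbedding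

lemma map_volume_add_div (c : ℝ) {r : ℝ} (hr : r ≠ 0) :
    volume.map (fun x : ℝ => (x + c) / r) = ENNReal.ofReal |r| • volume := by
  have h : (fun x : ℝ => (x + c) / r) = (· * r⁻¹) ∘ (· + c) := by
    funext x; simp [div_eq_mul_inv]
  rw [h, ← Measure.map_map (measurable_mul_const _) (measurable_add_const c),
    map_add_right_eq_self, Real.map_volume_mul_right (inv_ne_zero hr), inv_inv]

section Hutchinson

variable {ι : Type*} [Fintype ι] (d : ι → ℝ)

def hutchinson (ν : Measure ℝ) : Measure ℝ :=
  (Fintype.card ι : ℝ≥0)⁻¹ • ∑ i, ν.map (fun x => (x + d i) / 4)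

def hutchinsonMultiplier (t : ℝ) : ℂ :=
  (Fintype.card ι : ℂ)⁻¹ * ∑ i, exp (t * d i * I)

lemma hutchinsonMultiplier_add_prod {κ : Type*} [Fintype κ] (e : κ → ℝ) (t : ℝ) :
    hutchinsonMultiplier (fun p : ι × κ => d p.1 + e p.2) t
      = hutchinsonMultiplier d t * hutchinsonMultiplier e t := by
  simp only [hutchinsonMultiplier, Fintype.card_prod, Fintype.sum_prod_type, Nat.cast_mul,
    mul_inv, ofReal_add, mul_add, add_mul, Complex.exp_add, ← Finset.mul_sum, ← Finset.sum_mul]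
  ring

lemma hutchinsonMultiplier_const_mul (u t : ℝ) :
    hutchinsonMultiplier (fun i => u * d i) t = hutchinsonMultiplier d (u * t) := by
  simp only [hutchinsonMultiplier]
  congr 1
  refine Finset.sum_congr rfl fun i _ => ?_
  push_cast
  ring_nf

variable {d}

instance {ν : Measure ℝ} [IsFiniteMeasure ν] : IsFiniteMeasure (hutchinson d ν) := by
  unfold hutchinson; infer_instance

lemma hutchinson_add (μ ν : Measure ℝ) :
    hutchinson d (μ + ν) = hutchinson d μ + hutchinson d ν := by
  simp only [hutchinson, Finset.sum_add_distrib, smul_add,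
    Measure.map_add _ _ (measurableEmbedding_add_div _ four_ne_zero).measurable]

lemma hutchinson_mutuallySingular {ν : Measure ℝ} (h : ν ⟂ₘ volume) :
    hutchinson d ν ⟂ₘ volume := by
  refine (Finset.sum_induction _ (· ⟂ₘ volume) (fun _ _ => .add_left) .zero_left
    fun i _ => ?_).smul _
  refine ((measurableEmbedding_add_div (d i) four_ne_zero).mutuallySingular_map h).mono_ac .rfl ?_
  rw [map_volume_add_div _ four_ne_zero]
  exact Measure.absolutelyContinuous_smul (by norm_num)

lemma hutchinson_absolutelyContinuous {ν : Measure ℝ} (h : ν ≪ volume) :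
    hutchinson d ν ≪ volume := by
  refine (Finset.sum_induction _ (· ≪ volume) (fun _ _ => .add_left)
    (Measure.AbsolutelyContinuous.zero _) fun i _ => ?_).smul_left _
  refine (h.map (measurableEmbedding_add_div (d i) four_ne_zero).measurable).trans ?_
  rw [map_volume_add_div _ four_ne_zero]
  exact .smul_left .rfl _

lemma withDensity_rnDeriv_hutchinson (μ : Measure ℝ) [IsFiniteMeasure μ] :
    volume.withDensity ((hutchinson d μ).rnDeriv volume)
      = hutchinson d (volume.withDensity (μ.rnDeriv volume)) := by
  have hρ := Measure.withDensity_rnDeriv_eq _ _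
    (hutchinson_absolutelyContinuous (d := d) (withDensity_absolutelyContinuous volume
      (μ.rnDeriv volume)))
  refine (Measure.eq_withDensity_rnDeriv (Measure.measurable_rnDeriv _ _)
    (hutchinson_mutuallySingular (d := d) (μ.mutuallySingular_singularPart volume)) ?_).symm.trans
    hρ
  rw [hρ, ← hutchinson_add, ← μ.haveLebesgueDecomposition_add volume]

lemma charFun_map_add_div_four (ν : Measure ℝ) (c t : ℝ) :
    charFun (ν.map fun x => (x + c) / 4) (4 * t) = exp (t * c * I) * charFun ν t := by
  rw [charFun_apply_real, charFun_apply_real, integral_map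
    (measurableEmbedding_add_div c four_ne_zero).measurable.aemeasurable (by fun_prop),
    ← integral_const_mul]
  congr with x
  rw [← Complex.exp_add]
  push_cast
  ring_nf

lemma charFun_hutchinson (ν : Measure ℝ) [IsFiniteMeasure ν] (t : ℝ) :
    charFun (hutchinson d ν) (4 * t) = hutchinsonMultiplier d t * charFun ν t := by
  have hint (ν' : Measure ℝ) [IsFiniteMeasure ν'] (s : ℝ) :
      Integrable (fun x : ℝ => exp (s * x * I)) ν' :=
    .of_bound (by fun_prop) 1 (ae_of_all _ fun x => by
      rw [← ofReal_mul, norm_exp_ofReal_mul_I])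
  have hterm (i : ι) : ∫ x, exp ((4 * t : ℝ) * x * I) ∂(ν.map fun x => (x + d i) / 4)
      = exp (t * d i * I) * charFun ν t := by
    rw [← charFun_apply_real, charFun_map_add_div_four]
  rw [hutchinson, charFun_apply_real, integral_smul_nnreal_measure,
    integral_finsetSum_measure fun i _ => hint _ _]
  simp only [hterm, ← Finset.sum_mul, hutchinsonMultiplier, NNReal.smul_def, real_smul]
  push_cast
  ring

end Hutchinson

section FourMulFunctionalEquation

lemma eq_prod_mul_of_four_mul {F w : ℝ → ℂ} (h : ∀ t, F (4 * t) = w t * F t) (s : ℝ) (n : ℕ) :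
    F s = (∏ j ∈ Finset.range n, w (s / 4 ^ (j + 1))) * F (s / 4 ^ n) := by
  induction n with
  | zero => simp
  | succ n ih =>
    rw [ih, Finset.prod_range_succ, mul_assoc, ← h, pow_succ]
    congr 3
    field_simp

lemma tendsto_charFun_div_four_pow (μ : Measure ℝ) [IsFiniteMeasure μ] (s : ℝ) :
    Tendsto (fun n : ℕ => charFun μ (s / 4 ^ n)) atTop (𝓝 (μ.real univ)) := by
  have h : Tendsto (fun n : ℕ => s / 4 ^ n) atTop (𝓝 0) :=
    tendsto_const_nhds.div_atTop (tendsto_pow_atTop_atTop_of_one_lt (by norm_num))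
  simpa [Function.comp_def] using (continuous_charFun.tendsto 0).comp h

variable {μ ν : Measure ℝ} [IsFiniteMeasure μ] {w : ℝ → ℂ}

lemma charFun_ne_zero_of_four_mul (hμ : μ ≠ 0) (h : ∀ t, charFun μ (4 * t) = w t * charFun μ t)
    {s : ℝ} (hw : ∀ j : ℕ, w (s / 4 ^ (j + 1)) ≠ 0) : charFun μ s ≠ 0 := by
  have hμ' : (μ.real univ : ℂ) ≠ 0 := by
    simpa [measureReal_eq_zero_iff] using hμ
  obtain ⟨n, hn⟩ := ((tendsto_charFun_div_four_pow μ s).eventually_ne hμ').exists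
  rw [eq_prod_mul_of_four_mul h s n]
  exact mul_ne_zero (Finset.prod_ne_zero_iff.2 fun j _ => hw j) hn

lemma charFun_mul_measureReal_univ_comm [IsFiniteMeasure ν]
    (hμ : ∀ t, charFun μ (4 * t) = w t * charFun μ t)
    (hν : ∀ t, charFun ν (4 * t) = w t * charFun ν t) (s : ℝ) :
    charFun μ s * ν.real univ = charFun ν s * μ.real univ := by
  have h (n : ℕ) :
      charFun μ s * charFun ν (s / 4 ^ n) = charFun ν s * charFun μ (s / 4 ^ n) := by
    rw [eq_prod_mul_of_four_mul hμ s n, eq_prod_mul_of_four_mul hν s n]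
    ring
  exact tendsto_nhds_unique ((tendsto_charFun_div_four_pow ν s).const_mul _)
    (((tendsto_charFun_div_four_pow μ s).const_mul _).congr fun n => (h n).symm)

end FourMulFunctionalEquation

lemma tendsto_charFun_cocompact_of_absolutelyContinuous {ρ : Measure ℝ} [IsFiniteMeasure ρ]
    (h : ρ ≪ volume) : Tendsto (charFun ρ) (cocompact ℝ) (𝓝 0) := by
  set g : ℝ → ℂ := fun x => ((ρ.rnDeriv volume x).toReal : ℂ)
  have hρ (t : ℝ) : charFun ρ t = ∫ v, Real.fourierChar (-(v * (-(2 * π)⁻¹ * t))) • g v := by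
    rw [charFun_apply_real, ← Measure.withDensity_rnDeriv_eq ρ volume h,
      integral_withDensity_eq_integral_toReal_smul (Measure.measurable_rnDeriv _ _)
        (Measure.rnDeriv_lt_top _ _)]
    congr with v
    rw [Circle.smul_def, Real.fourierChar_apply, smul_eq_mul, real_smul, mul_comm]
    congr 2
    push_cast
    field_simp
  have hc : Tendsto (fun t : ℝ => -(2 * π)⁻¹ * t) (cocompact ℝ) (cocompact ℝ) :=
    (Homeomorph.mulLeft₀ _ (by simp [Real.pi_ne_zero])).map_cocompact.le
  exact ((Real.tendsto_integral_exp_smul_cocompact g).comp hc).congr fun t => (hρ t).symm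

theorem mutuallySingular_volume_of_hutchinson_eq {ι : Type*} [Fintype ι] {d : ι → ℝ}
    {μ : Measure ℝ} [IsFiniteMeasure μ] (hμ : hutchinson d μ = μ)
    (h : ¬ Tendsto (charFun μ) atTop (𝓝 0)) : μ ⟂ₘ volume := by
  set ρ := volume.withDensity (μ.rnDeriv volume)
  have : IsFiniteMeasure ρ := isFiniteMeasure_of_le _ (μ.withDensity_rnDeriv_le volume)
  have hfe (ν : Measure ℝ) [IsFiniteMeasure ν] (hν : hutchinson d ν = ν) (t : ℝ) :
      charFun ν (4 * t) = hutchinsonMultiplier d t * charFun ν t := by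
    rw [← charFun_hutchinson, hν]
  have hρ : hutchinson d ρ = ρ := by rw [← withDensity_rnDeriv_hutchinson, hμ]
  have hρ0 : ρ.real univ = 0 := by
    by_contra hne
    have hRL := (tendsto_charFun_cocompact_of_absolutelyContinuous
      (withDensity_absolutelyContinuous volume (μ.rnDeriv volume))).mono_left atTop_le_cocompact
    have hμρ (s : ℝ) : charFun ρ s * (μ.real univ / ρ.real univ : ℂ) = charFun μ s := by
      rw [← mul_div_assoc, charFun_mul_measureReal_univ_comm (hfe ρ hρ) (hfe μ hμ) s,
        mul_div_cancel_right₀ _ (by exact_mod_cast hne)]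
    exact h (by simpa only [zero_mul] using (hRL.mul_const _).congr hμρ)
  rw [measureReal_eq_zero_iff, Measure.measure_univ_eq_zero] at hρ0
  have hdec : μ.singularPart volume + ρ = μ := μ.singularPart_add_rnDeriv volume
  rw [hρ0, add_zero] at hdec
  exact hdec ▸ μ.mutuallySingular_singularPart volume

def Bool.toReal (b : Bool) : ℝ := if b then 1 else 0

def binaryDigits (x : ℝ) (j : ℕ) : Bool := decide (⌊x * 2 ^ (j + 1)⌋ % 2 = 1)

def seqCons (b : Bool) (ε : ℕ → Bool) : ℕ → Bool
  | 0 => b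
  | k + 1 => ε k

lemma measurable_binaryDigits : Measurable binaryDigits :=
  measurable_pi_lambda _ fun _ =>
    (measurable_of_countable (fun n : ℤ => decide (n % 2 = 1))).comp
      (measurable_id.mul_const _).floor

lemma measurable_seqCons (b : Bool) : Measurable (seqCons b) :=
  measurable_pi_lambda _ fun j => by
    cases j with
    | zero => exact measurable_const
    | succ k => exact measurable_pi_apply k

instance : IsProbabilityMeasure (volume.restrict (Ico (0 : ℝ) 1)) :=
  ⟨by simp⟩

lemma bernoulliProd_eq_map : bernoulliProd = (volume.restrict (Ico (0 : ℝ) 1)).map binaryDigits :=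
  rfl

instance : IsProbabilityMeasure bernoulliProd :=
  Measure.isProbabilityMeasure_map measurable_binaryDigits.aemeasurable

lemma binaryDigits_add_div_two (b : Bool) {x : ℝ} (hx : x ∈ Ico (0 : ℝ) 1) :
    binaryDigits ((x + b.toReal) / 2) = seqCons b (binaryDigits x) := by
  have hx0 : ⌊x⌋ = 0 := Int.floor_eq_zero_iff.2 hx
  funext j
  cases j with
  | zero => cases b <;> simp [binaryDigits, seqCons, Bool.toReal, hx0]
  | succ k =>
    cases b with
    | false =>
      have h : (x + false.toReal) / 2 * 2 ^ (k + 1 + 1) = x * 2 ^ (k + 1) := by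
        simp [Bool.toReal]; ring
      simp only [binaryDigits, seqCons, h]
    | true =>
      have h : (x + true.toReal) / 2 * 2 ^ (k + 1 + 1)
          = x * 2 ^ (k + 1) + ((2 ^ (k + 1) : ℤ) : ℝ) := by
        simp only [Bool.toReal]; push_cast; ring
      have h2 : (⌊x * 2 ^ (k + 1)⌋ + 2 ^ (k + 1)) % 2 = ⌊x * 2 ^ (k + 1)⌋ % 2 := by
        rw [pow_succ (2 : ℤ), Int.add_mul_emod_self_right]
      simp only [binaryDigits, seqCons, h, Int.floor_add_intCast, h2]

lemma map_volume_restrict_Ico_add_div_two (c : ℝ) :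
    (volume.restrict (Ico (0 : ℝ) 1)).map (fun x => (x + c) / 2)
      = (2 : ℝ≥0) • volume.restrict (Ico (c / 2) ((c + 1) / 2)) := by
  have hpre : (fun x : ℝ => (x + c) / 2) ⁻¹' Ico (c / 2) ((c + 1) / 2) = Ico 0 1 := by
    ext x
    simp only [mem_preimage, mem_Ico]
    constructor <;> rintro ⟨h1, h2⟩ <;> constructor <;> linarith
  rw [← hpre, ← Measure.restrict_map (by fun_prop) measurableSet_Ico,
    map_volume_add_div c two_ne_zero, Measure.restrict_smul]
  rw [abs_two, ENNReal.ofReal_ofNat]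
  rfl

lemma volume_restrict_Ico_eq_sum_map :
    volume.restrict (Ico (0 : ℝ) 1)
      = (2 : ℝ≥0)⁻¹ • ∑ b : Bool, (volume.restrict (Ico (0 : ℝ) 1)).map
          fun x => (x + b.toReal) / 2 := by
  simp only [map_volume_restrict_Ico_add_div_two, ← Finset.smul_sum, smul_smul, Fintype.sum_bool,
    Bool.toReal]
  norm_num
  rw [add_comm, ← Measure.restrict_union Ico_disjoint_Ico_same measurableSet_Ico,
    Ico_union_Ico_eq_Ico]
  all_goals norm_num

lemma bernoulliProd_eq_sum_map_seqCons :
    bernoulliProd = (2 : ℝ≥0)⁻¹ • ∑ b : Bool, bernoulliProd.map (seqCons b) := by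
  have h (b : Bool) : bernoulliProd.map (seqCons b)
      = ((volume.restrict (Ico (0 : ℝ) 1)).map fun x => (x + b.toReal) / 2).map binaryDigits := by
    rw [bernoulliProd_eq_map, Measure.map_map (measurable_seqCons b) measurable_binaryDigits,
      Measure.map_map measurable_binaryDigits (by fun_prop)]
    exact Measure.map_congr ((ae_restrict_iff' measurableSet_Ico).2
      (.of_forall fun x hx => (binaryDigits_add_div_two b hx).symm))
  conv_lhs => rw [bernoulliProd_eq_map, volume_restrict_Ico_eq_sum_map]
  simp only [h, Fintype.sum_bool, Measure.map_add _ _ measurable_binaryDigits, Measure.map_smul]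

def quaternarySum (ε : ℕ → Bool) : ℝ := ∑' j, (ε j).toReal / 4 ^ (j + 1)

lemma norm_toReal_div_four_pow_le (b : Bool) (j : ℕ) :
    ‖b.toReal / 4 ^ (j + 1)‖ ≤ (4 ^ (j + 1))⁻¹ := by
  cases b <;> simp [Bool.toReal]

lemma summable_inv_four_pow_succ : Summable fun j : ℕ => ((4 : ℝ) ^ (j + 1))⁻¹ := by
  simpa [pow_succ, mul_inv] using
    (summable_geometric_of_lt_one (by norm_num) (by norm_num : (4 : ℝ)⁻¹ < 1)).mul_left 4⁻¹

lemma summable_toReal_div_four_pow (ε : ℕ → Bool) :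
    Summable fun j => (ε j).toReal / 4 ^ (j + 1) :=
  .of_norm_bounded summable_inv_four_pow_succ fun j => norm_toReal_div_four_pow_le _ j

lemma continuous_quaternarySum : Continuous quaternarySum :=
  continuous_tsum (fun j =>
    ((continuous_of_discreteTopology (f := Bool.toReal)).comp (continuous_apply j)).div_const _)
    summable_inv_four_pow_succ fun j ε => norm_toReal_div_four_pow_le (ε j) j

lemma quaternarySum_seqCons (b : Bool) (ε : ℕ → Bool) :
    quaternarySum (seqCons b ε) = (quaternarySum ε + b.toReal) / 4 := by
  rw [quaternarySum, (summable_toReal_div_four_pow _).tsum_eq_zero_add, quaternarySum,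
    add_div, ← tsum_div_const, add_comm]
  congr 1
  · exact tsum_congr fun j => by simp only [seqCons, pow_succ, div_div]
  · simp [seqCons]

def quaternaryCantor : Measure ℝ := bernoulliProd.map quaternarySum

instance : IsProbabilityMeasure quaternaryCantor :=
  Measure.isProbabilityMeasure_map continuous_quaternarySum.measurable.aemeasurable

lemma hutchinson_quaternaryCantor :
    hutchinson Bool.toReal quaternaryCantor = quaternaryCantor := by
  have h (b : Bool) : (bernoulliProd.map (seqCons b)).map quaternarySum
      = quaternaryCantor.map fun x => (x + b.toReal) / 4 := by
    rw [Measure.map_map continuous_quaternarySum.measurable (measurable_seqCons b),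
      quaternaryCantor, Measure.map_map (by fun_prop) continuous_quaternarySum.measurable]
    congr 1
    funext ε
    exact quaternarySum_seqCons b ε
  conv_rhs => rw [quaternaryCantor, bernoulliProd_eq_sum_map_seqCons]
  simp only [hutchinson, Fintype.sum_bool, Measure.map_smul,
    Measure.map_add _ _ continuous_quaternarySum.measurable, h]
  norm_num

lemma hutchinsonMultiplier_toReal (t : ℝ) :
    hutchinsonMultiplier Bool.toReal t = (1 + exp (t * I)) / 2 := by
  simp [hutchinsonMultiplier, Bool.toReal]
  ring

lemma charFun_quaternaryCantor_four_mul (t : ℝ) :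
    charFun quaternaryCantor (4 * t) = (1 + exp (t * I)) / 2 * charFun quaternaryCantor t := by
  rw [← hutchinsonMultiplier_toReal, ← charFun_hutchinson, hutchinson_quaternaryCantor]

lemma muBes_eq_map_prod (u : ℝ) :
    muBes u = (quaternaryCantor.prod (quaternaryCantor.map (u * ·))).map fun p => p.1 + p.2 := by
  have hX := continuous_quaternarySum.measurable
  rw [quaternaryCantor, Measure.map_map (measurable_const_mul u) hX,
    Measure.map_prod_map _ _ hX (by fun_prop), Measure.map_map (by fun_prop) (by fun_prop), muBes]
  congr 1
  funext ε
  simp only [Function.comp, Prod.map, quaternarySum]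
  rw [← tsum_mul_left, ← Summable.tsum_add (summable_toReal_div_four_pow _)
    ((summable_toReal_div_four_pow _).mul_left u)]
  congr 1
  funext j
  simp only [Bool.toReal]
  ring

instance (u : ℝ) : IsProbabilityMeasure (quaternaryCantor.map (u * ·)) :=
  Measure.isProbabilityMeasure_map (measurable_const_mul u).aemeasurable

instance (u : ℝ) : IsProbabilityMeasure (muBes u) := by
  rw [muBes_eq_map_prod]
  exact Measure.isProbabilityMeasure_map (by fun_prop)

lemma charFun_muBes (u t : ℝ) :
    charFun (muBes u) t = charFun quaternaryCantor t * charFun quaternaryCantor (u * t) := by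
  rw [muBes_eq_map_prod, ProbabilityTheory.charFun_map_add_prod_eq_mul, Pi.mul_apply,
    charFun_map_mul]

lemma hutchinson_muBes (u : ℝ) :
    hutchinson (fun p : Bool × Bool => p.1.toReal + u * p.2.toReal) (muBes u) = muBes u := by
  refine Measure.ext_of_charFun (funext fun s => ?_)
  have hs : s = 4 * (s / 4) := by ring
  rw [hs, charFun_hutchinson,
    hutchinsonMultiplier_add_prod Bool.toReal (fun b : Bool => u * b.toReal),
    hutchinsonMultiplier_const_mul,
    hutchinsonMultiplier_toReal, hutchinsonMultiplier_toReal, charFun_muBes, charFun_muBes,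
    mul_left_comm u 4, charFun_quaternaryCantor_four_mul, charFun_quaternaryCantor_four_mul]
  ring

lemma fstDigit_pow_mul {b c : ℕ} (hb : 1 < b) (hc : ¬ b ∣ c) (j : ℕ) :
    fstDigit b (b ^ j * c) = c % b := by
  have hc0 : c ≠ 0 := by rintro rfl; exact hc (dvd_zero b)
  have hbj : b ^ j * c ≠ 0 := by positivity
  have hv : padicValNat b (b ^ j * c) = j := by
    refine le_antisymm (not_lt.1 fun h => hc ?_)
      ((padicValNat_dvd_iff_le_of_ne_one hb.ne' hbj).1 (dvd_mul_right _ _))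
    have h' := (padicValNat_dvd_iff_le_of_ne_one hb.ne' hbj).2 h
    rw [pow_succ, mul_comm (b ^ j) c, mul_comm (b ^ j) b] at h'
    exact Nat.dvd_of_mul_dvd_mul_right (by positivity) h'
  rw [fstDigit, hv, Nat.mul_div_cancel_left _ (by positivity)]

lemma one_add_exp_two_pi_mul_div_four_pow_ne_zero {m : ℕ} (hm : Odd (fstDigit 4 m)) (j : ℕ) :
    1 + exp (↑(2 * π * m / 4 ^ (j + 1)) * I) ≠ 0 := by
  -- otherwise `2m = 4^{j+1}(2k+1)`, so `m = 4^j · 2(2k+1)` has first base-4 digit `2`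
  intro h
  have hcos : Real.cos (2 * π * m / 4 ^ (j + 1)) = -1 := by
    have := congrArg re h
    simp only [add_re, one_re, exp_ofReal_mul_I_re, zero_re] at this
    linarith
  obtain ⟨k, hk⟩ := Real.cos_eq_neg_one_iff.1 hcos
  have hkR : (4 : ℝ) ^ (j + 1) * (2 * k + 1) = 2 * m := by
    field_simp at hk
    nlinarith [Real.pi_pos]
  have hkZ : (4 : ℤ) ^ (j + 1) * (2 * k + 1) = 2 * m := by exact_mod_cast hkR
  lift k to ℕ using by nlinarith [pow_pos (by norm_num : (0 : ℤ) < 4) (j + 1)]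
  have hkN : (4 : ℕ) ^ (j + 1) * (2 * k + 1) = 2 * m := by exact_mod_cast hkZ
  have hmk : m = 4 ^ j * (2 * (2 * k + 1)) := by
    rw [pow_succ] at hkN
    linarith
  rw [hmk, fstDigit_pow_mul (by norm_num) (by omega), Nat.odd_iff] at hm
  omega

lemma charFun_quaternaryCantor_two_pi_mul_ne_zero {m : ℕ} (hm : Odd (fstDigit 4 m)) :
    charFun quaternaryCantor (2 * π * m) ≠ 0 :=
  charFun_ne_zero_of_four_mul (IsProbabilityMeasure.ne_zero _) charFun_quaternaryCantor_four_mul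
    fun j => div_ne_zero (one_add_exp_two_pi_mul_div_four_pow_ne_zero hm j) two_ne_zero

lemma charFun_quaternaryCantor_two_pi_mul_mul_four_pow (n k : ℕ) :
    charFun quaternaryCantor (2 * π * n * 4 ^ k) = charFun quaternaryCantor (2 * π * n) := by
  induction k with
  | zero => simp
  | succ k ih =>
    have hexp : exp (↑(2 * π * n * 4 ^ k) * I) = 1 :=
      exp_eq_one_iff.2 ⟨n * 4 ^ k, by push_cast; ring⟩
    rw [pow_succ, ← mul_assoc, mul_comm _ (4 : ℝ), charFun_quaternaryCantor_four_mul, hexp, ih]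
    norm_num

lemma fourierMeasure_eq_charFun (μ : Measure ℝ) : fourierMeasure μ = charFun μ := by
  funext t
  rw [fourierMeasure, charFun_apply_real]
  congr with x
  ring_nf

end

theorem limsup_fourier_muBes_pos_of_odd_odd_general (p q : ℕ) (hq : 0 < q)
    (hp' : Odd (fstDigit 4 p)) (hq' : Odd (fstDigit 4 q)) :
    0 < limsup (fun t : ℝ => ‖fourierMeasure (muBes ((p : ℝ) / q)) t‖) atTop ∧
    ¬ Tendsto (fourierMeasure (muBes ((p : ℝ) / q))) atTop (nhds 0) ∧
    (muBes ((p : ℝ) / q)).MutuallySingular volume := by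
  set μ := muBes ((p : ℝ) / q)
  set c := charFun quaternaryCantor (2 * π * q) * charFun quaternaryCantor (2 * π * p)
  have hc : c ≠ 0 := mul_ne_zero (charFun_quaternaryCantor_two_pi_mul_ne_zero hq')
    (charFun_quaternaryCantor_two_pi_mul_ne_zero hp')
  have hval (k : ℕ) : charFun μ (2 * π * q * 4 ^ k) = c := by
    have hu : (p : ℝ) / q * (2 * π * q * 4 ^ k) = 2 * π * p * 4 ^ k := by
      field_simp
    rw [charFun_muBes, hu, charFun_quaternaryCantor_two_pi_mul_mul_four_pow,
      charFun_quaternaryCantor_two_pi_mul_mul_four_pow]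
  have ht : Tendsto (fun k : ℕ => 2 * π * q * 4 ^ k) atTop atTop :=
    (tendsto_pow_atTop_atTop_of_one_lt (by norm_num)).const_mul_atTop (by positivity)
  have hnot : ¬ Tendsto (charFun μ) atTop (𝓝 0) := fun h =>
    hc (tendsto_nhds_unique tendsto_const_nhds ((h.comp ht).congr hval))
  rw [fourierMeasure_eq_charFun]
  refine ⟨(norm_pos_iff.2 hc).trans_le (le_limsup_of_frequently_le ?_ ?_), hnot,
    mutuallySingular_volume_of_hutchinson_eq (hutchinson_muBes _) hnot⟩
  · exact ht.frequently (.of_forall fun k => by rw [hval])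
  · exact isBoundedUnder_of ⟨1, norm_charFun_le_one⟩

/-- If `u = p/q` with `p, q` positive coprime and both `p*`, `q*` odd, then
`limsup_{t→∞} |μ̂_u(t)| > 0`; in particular `μ̂_u` does not tend to `0` at infinity, and
`μ_u` is singular with respect to Lebesgue measure. -/
theorem limsup_fourier_muBes_pos_of_odd_odd (p q : ℕ) (hp : 0 < p) (hq : 0 < q)
    (hpq : Nat.Coprime p q) (hp' : Odd (fstDigit 4 p)) (hq' : Odd (fstDigit 4 q)) :
    0 < limsup (fun t : ℝ => ‖fourierMeasure (muBes ((p : ℝ) / q)) t‖) atTop ∧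
    ¬ Tendsto (fourierMeasure (muBes ((p : ℝ) / q))) atTop (nhds 0) ∧
    (muBes ((p : ℝ) / q)).MutuallySingular volume :=
  limsup_fourier_muBes_pos_of_odd_odd_general p q hq hp' hq'
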